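/- arXiv:2009.11986 — 2 statements merged into one kernel-verified Lean document; each statement's English description precedes it below -/
import Mathlib

section
/- Let f : (0,∞) → (0,1] be increasing with f₀ := lim_{r→0⁺} f(r) > 0, let x(r) = ∫₀^r f(s)^{-2} ds and r(x) its inverse. Fix κ ∈ ℤ with κ ≥ 1. Then every nonzero solution u₁ of u₁'(x) + (κ f(r(x))/r(x)) u₁(x) = 0 on (0, x₀) (for suitable x₀ > 0) fails to be square-integrable near x = 0. -/
open Set Filter MeasureTheory

theorem limit_point_solution_not_L2
    (f : ℝ → ℝ) (f₀ : ℝ)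
    (hmono : MonotoneOn f (Ioi 0))
    (hrange : ∀ s > 0, 0 < f s ∧ f s ≤ 1)
    (hf₀ : Tendsto f (nhdsWithin 0 (Ioi 0)) (nhds f₀)) (hf₀pos : 0 < f₀)
    (x : ℝ → ℝ) (hx : ∀ r, x r = ∫ s in (0:ℝ)..r, ((f s) ^ 2)⁻¹)
    (rInv : ℝ → ℝ)
    (hrInv : ∀ y > 0, 0 < rInv y ∧ x (rInv y) = y)
    (κ : ℤ) (hκ : 1 ≤ κ) :
    ∃ x₀ > 0, ∀ u : ℝ → ℝ,
      (∀ y ∈ Ioo 0 x₀,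
        HasDerivAt u (-(κ * f (rInv y) / rInv y) * u y) y) →
      (∃ y ∈ Ioo 0 x₀, u y ≠ 0) →
      ¬ IntegrableOn (fun y => (u y) ^ 2) (Ioo 0 x₀) := by
  -- f₀ is a lower bound for f on (0, ∞)
  have hf_lb : ∀ s > 0, f₀ ≤ f s := by
    intro s hs
    refine le_of_tendsto hf₀ ?_
    filter_upwards [self_mem_nhdsWithin,
      mem_nhdsWithin_of_mem_nhds (Iio_mem_nhds hs)] with t ht hts
    exact hmono ht hs (le_of_lt hts)
  -- key: x r ≥ r / f r ^ 2
  have key : ∀ r > 0, r ≤ x r * f r ^ 2 := by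
    intro r hr
    set g : ℝ → ℝ := fun s => if 0 < s then (f s ^ 2)⁻¹ else (f₀ ^ 2)⁻¹ with hgdef
    have hganti : AntitoneOn g (Icc 0 r) := by
      intro a ha b hb hab
      by_cases ha0 : 0 < a
      · have hb0 : 0 < b := lt_of_lt_of_le ha0 hab
        have hfa := (hrange a ha0).1
        have hfab := hmono ha0 hb0 hab
        simp only [hgdef, if_pos ha0, if_pos hb0]
        gcongr
      · by_cases hb0 : 0 < b
        · have hfb := hf_lb b hb0
          simp only [hgdef, if_pos hb0, if_neg ha0]
          gcongr
        · simp only [hgdef, if_neg ha0, if_neg hb0, le_refl]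
    have hgint : IntervalIntegrable g MeasureTheory.volume 0 r := by
      have : AntitoneOn g (uIcc 0 r) := by rw [uIcc_of_le hr.le]; exact hganti
      exact this.intervalIntegrable
    have hle : ∀ s ∈ Icc 0 r, (f r ^ 2)⁻¹ ≤ g s := by
      intro s hs
      have h := hganti hs ⟨hr.le, le_refl r⟩ hs.2
      simpa [hgdef, if_pos hr] using h
    have h1 : r * (f r ^ 2)⁻¹ ≤ ∫ s in (0:ℝ)..r, g s := by
      have := intervalIntegral.integral_mono_on hr.le
        (intervalIntegrable_const (c := (f r ^ 2)⁻¹)) hgint hle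
      simpa [smul_eq_mul] using this
    have h2 : (∫ s in (0:ℝ)..r, g s) = x r := by
      rw [hx]
      refine intervalIntegral.integral_congr_ae ?_
      refine Filter.Eventually.of_forall (fun s hs => ?_)
      rw [uIoc_of_le hr.le] at hs
      simp [hgdef, hs.1]
    have hfr : 0 < f r := (hrange r hr).1
    have hfr2 : (0:ℝ) < f r ^ 2 := by positivity
    have h3 : r * (f r ^ 2)⁻¹ * f r ^ 2 ≤ x r * f r ^ 2 :=
      mul_le_mul_of_nonneg_right (h2 ▸ h1) hfr2.le
    calc r = r * (f r ^ 2)⁻¹ * f r ^ 2 := by field_simp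
      _ ≤ x r * f r ^ 2 := h3
  -- choose x₀ = 1
  refine ⟨1, one_pos, fun u hu hne hint => ?_⟩
  obtain ⟨y₁, hy₁, hy₁ne⟩ := hne
  set φ : ℝ → ℝ := fun y => y ^ 2 * (u y) ^ 2 with hφdef
  have hderiv : ∀ y ∈ Ioo (0:ℝ) 1, HasDerivAt φ
      ((2 * y ^ 1) * (u y) ^ 2 +
        y ^ 2 * ((2:ℕ) * u y ^ 1 * (-(κ * f (rInv y) / rInv y) * u y))) y := by
    intro y hy
    exact (hasDerivAt_pow 2 y).mul ((hu y hy).pow 2)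
  have hderiv_nonpos : ∀ y ∈ Ioo (0:ℝ) 1,
      (2 * y ^ 1) * (u y) ^ 2 +
        y ^ 2 * ((2:ℕ) * u y ^ 1 * (-(κ * f (rInv y) / rInv y) * u y)) ≤ 0 := by
    intro y hy
    obtain ⟨hrpos, hxr⟩ := hrInv y hy.1
    set r := rInv y with hrdef
    have hfr := (hrange r hrpos).1
    have hfr1 := (hrange r hrpos).2
    have hκ' : (1:ℝ) ≤ (κ:ℝ) := by exact_mod_cast hκ
    have hr_le : r ≤ (κ:ℝ) * f r * y := by
      have h1 : r ≤ x r * f r ^ 2 := key r hrpos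
      rw [hxr] at h1
      nlinarith [hy.1, hfr, hfr1, hκ']
    have hya : y ≤ y ^ 2 * ((κ:ℝ) * f r / r) := by
      rw [show y ^ 2 * ((κ:ℝ) * f r / r) = y ^ 2 * ((κ:ℝ) * f r) / r from
        (mul_div_assoc _ _ _).symm, le_div_iff₀ hrpos]
      nlinarith [hy.1]
    nlinarith [sq_nonneg (u y), hya, sq_nonneg y]
  have hφmono : ∀ y ∈ Ioo 0 y₁, φ y₁ ≤ φ y := by
    intro y hy
    have hsub : Icc y y₁ ⊆ Ioo (0:ℝ) 1 := fun z hz =>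
      ⟨lt_of_lt_of_le hy.1 hz.1, lt_of_le_of_lt hz.2 hy₁.2⟩
    have hanti : AntitoneOn φ (Icc y y₁) := by
      refine antitoneOn_of_deriv_nonpos (convex_Icc y y₁) ?_ ?_ ?_
      · intro z hz
        exact ((hderiv z (hsub hz)).differentiableAt.continuousAt).continuousWithinAt
      · rw [interior_Icc]
        intro z hz
        exact ((hderiv z (hsub (Ioo_subset_Icc_self hz))).differentiableAt).differentiableWithinAt
      · rw [interior_Icc]
        intro z hz
        rw [(hderiv z (hsub (Ioo_subset_Icc_self hz))).deriv]
        exact hderiv_nonpos z (hsub (Ioo_subset_Icc_self hz))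
    exact hanti ⟨le_refl y, hy.2.le⟩ ⟨hy.2.le, le_refl y₁⟩ hy.2.le
  set c : ℝ := y₁ ^ 2 * (u y₁) ^ 2 with hcdef
  have hc : 0 < c :=
    mul_pos (pow_pos hy₁.1 2) ((sq_nonneg (u y₁)).lt_of_ne (Ne.symm (pow_ne_zero 2 hy₁ne)))
  have hint' : IntegrableOn (fun y => (u y) ^ 2) (Ioo 0 y₁) :=
    hint.mono_set (Ioo_subset_Ioo le_rfl hy₁.2.le)
  have hw : IntegrableOn (fun y : ℝ => (y ^ 2)⁻¹) (Ioo 0 y₁) := by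
    refine Integrable.mono (hint'.const_mul c⁻¹)
      ((measurable_id.pow_const 2).inv.aestronglyMeasurable) ?_
    rw [ae_restrict_iff' measurableSet_Ioo]
    refine Filter.Eventually.of_forall (fun y hy => ?_)
    have hy2 : (0:ℝ) < y ^ 2 := pow_pos hy.1 2
    have hφy : c ≤ y ^ 2 * (u y) ^ 2 := hφmono y hy
    have h1 : (y ^ 2)⁻¹ * c ≤ (y ^ 2)⁻¹ * (y ^ 2 * (u y) ^ 2) :=
      mul_le_mul_of_nonneg_left hφy (by positivity)
    rw [inv_mul_cancel_left₀ (ne_of_gt hy2)] at h1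
    have h2 : c⁻¹ * ((y ^ 2)⁻¹ * c) ≤ c⁻¹ * (u y) ^ 2 :=
      mul_le_mul_of_nonneg_left h1 (by positivity)
    have h3 : (y ^ 2)⁻¹ ≤ c⁻¹ * (u y) ^ 2 := by
      calc (y ^ 2)⁻¹ = c⁻¹ * ((y ^ 2)⁻¹ * c) := by field_simp
        _ ≤ c⁻¹ * (u y) ^ 2 := h2
    rw [Real.norm_of_nonneg (by positivity), Real.norm_of_nonneg (by positivity)]
    exact h3
  have hwr : IntegrableOn (fun y : ℝ => y ^ (-2 : ℝ)) (Ioo 0 y₁) := by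
    refine hw.congr_fun (fun y hy => ?_) measurableSet_Ioo
    rw [Real.rpow_neg hy.1.le, Real.rpow_two]
  rw [intervalIntegral.integrableOn_Ioo_rpow_iff hy₁.1] at hwr
  norm_num at hwr
end

section
/- Let f : (0,∞) → ℝ be continuous, bounded, with 0 < c ≤ f ≤ 1, and f(r) = 1 + O(1/r) as r → ∞. Let x(r) = ∫₀^r f(s)^{-2} ds. Then (1/x) ∫₁^x |f(r(t)) - 1| dt → 0 as x → ∞, where r(·) is the inverse of x(·). -/
open Set Filter MeasureTheory Topology Interval

/-! Since `c ≤ f`, the integrand of `x` is at most `c⁻²`, so `x r ≤ r / c²` and hence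
`rInv t ≥ c² t`. Combining `|f r - 1| ≤ C / r` for `r ≥ R` with the trivial bound `1` for
`r < R` gives `|f (rInv t) - 1| ≤ K / t` for all `t ≥ 1`, so the integral over `[1, X]` is
`O(log X) = o(X)`. -/

lemma tendsto_inv_mul_integral_of_le_div {g : ℝ → ℝ} {K : ℝ}
    (hg : ∀ t ≥ 1, 0 ≤ g t ∧ g t ≤ K / t) :
    Tendsto (fun X => (1 / X) * ∫ t in (1:ℝ)..X, g t) atTop (𝓝 0) := by
  have hlog : Tendsto (fun X => (1 / X) * (K * Real.log X)) atTop (𝓝 0) := by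
    simpa using (Real.isLittleO_log_id_atTop.tendsto_div_nhds_zero.const_mul K).congr
      fun X => by simp only [id]; ring
  refine squeeze_zero' ?_ ?_ hlog
  · filter_upwards [eventually_ge_atTop 1] with X hX
    exact mul_nonneg (by positivity)
      (intervalIntegral.integral_nonneg hX fun t ht => (hg t ht.1).1)
  · filter_upwards [eventually_ge_atTop 1] with X hX
    have hinv : IntervalIntegrable (fun t : ℝ => K / t) volume 1 X :=
      (continuousOn_const.div continuousOn_id fun t ht => by
        rw [uIcc_of_le hX] at ht; exact (one_pos.trans_le ht.1).ne').intervalIntegrable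
    gcongr
    calc ∫ t in (1:ℝ)..X, g t ≤ ∫ t in (1:ℝ)..X, K / t := by
          rw [intervalIntegral.integral_of_le hX, intervalIntegral.integral_of_le hX]
          -- no measurability of `g` is needed: a non-integrable `g` has integral `0`
          refine integral_mono_of_nonneg ?_ hinv.1 ?_
          · filter_upwards [ae_restrict_mem measurableSet_Ioc] with t ht using (hg t ht.1.le).1
          · filter_upwards [ae_restrict_mem measurableSet_Ioc] with t ht using (hg t ht.1.le).2
      _ = K * Real.log X := by
          simp_rw [div_eq_mul_inv]
          rw [intervalIntegral.integral_const_mul, integral_inv_of_pos one_pos (by linarith), div_one]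

lemma integral_inv_sq_le {f : ℝ → ℝ} {c r : ℝ} (hc : 0 < c) (hf : ∀ s > 0, c ≤ f s)
    (hr : 0 ≤ r) : ∫ s in (0:ℝ)..r, (f s ^ 2)⁻¹ ≤ r / c ^ 2 := by
  have hbound : ∀ s ∈ Ι 0 r, ‖(f s ^ 2)⁻¹‖ ≤ (c ^ 2)⁻¹ := by
    intro s hs
    rw [uIoc_of_le hr] at hs
    have hfs := hf s hs.1
    rw [Real.norm_of_nonneg (by positivity)]
    gcongr
  calc ∫ s in (0:ℝ)..r, (f s ^ 2)⁻¹ ≤ ‖∫ s in (0:ℝ)..r, (f s ^ 2)⁻¹‖ := Real.le_norm_self _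
    _ ≤ (c ^ 2)⁻¹ * |r - 0| := intervalIntegral.norm_integral_le_of_norm_le_const hbound
    _ = r / c ^ 2 := by rw [sub_zero, abs_of_nonneg hr, div_eq_inv_mul]

lemma abs_le_div_of_abs_le_one_of_le_div {a C R r : ℝ} (hR : 0 < R) (hr : 0 < r)
    (h1 : |a| ≤ 1) (hC : R ≤ r → |a| ≤ C / r) : |a| ≤ (|C| + R) / r := by
  rcases le_or_gt R r with hRr | hrR
  · calc |a| ≤ C / r := hC hRr
      _ ≤ (|C| + R) / r := by gcongr; linarith [le_abs_self C]
  · calc |a| ≤ 1 := h1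
      _ ≤ (|C| + R) / r := by rw [one_le_div hr]; linarith [abs_nonneg C]

theorem cesaro_f_minus_one_general (f : ℝ → ℝ) (c : ℝ)
    (hc : 0 < c)
    (hbnd : ∀ s > 0, c ≤ f s ∧ f s ≤ 1)
    (hO : ∃ C R : ℝ, 0 < R ∧ ∀ r ≥ R, |f r - 1| ≤ C / r)
    (x : ℝ → ℝ) (hx : ∀ r, x r = ∫ s in (0:ℝ)..r, ((f s) ^ 2)⁻¹)
    (rInv : ℝ → ℝ) (hrInv : ∀ y > 0, 0 < rInv y ∧ x (rInv y) = y) :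
    Tendsto (fun X => (1 / X) * ∫ t in (1:ℝ)..X, |f (rInv t) - 1|) atTop (nhds 0) := by
  obtain ⟨C, R, hR, hCR⟩ := hO
  refine tendsto_inv_mul_integral_of_le_div (K := (|C| + R) / c ^ 2) fun t ht => ⟨abs_nonneg _, ?_⟩
  obtain ⟨hr, hxr⟩ := hrInv t (by linarith)
  have hrt : c ^ 2 * t ≤ rInv t := by
    have := integral_inv_sq_le hc (fun s hs => (hbnd s hs).1) hr.le
    rwa [← hx, hxr, le_div_iff₀ (by positivity), mul_comm] at this
  have hf1 : |f (rInv t) - 1| ≤ 1 := by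
    obtain ⟨hcf, hf1⟩ := hbnd _ hr
    rw [abs_le]; constructor <;> linarith
  calc |f (rInv t) - 1| ≤ (|C| + R) / rInv t :=
        abs_le_div_of_abs_le_one_of_le_div hR hr hf1 (hCR _)
    _ ≤ (|C| + R) / (c ^ 2 * t) := by gcongr
    _ = (|C| + R) / c ^ 2 / t := (div_div _ _ _).symm

theorem cesaro_f_minus_one (f : ℝ → ℝ) (c : ℝ)
    (hcont : ContinuousOn f (Ioi 0)) (hc : 0 < c)
    (hbnd : ∀ s > 0, c ≤ f s ∧ f s ≤ 1)
    (hO : ∃ C R : ℝ, 0 < R ∧ ∀ r ≥ R, |f r - 1| ≤ C / r)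
    (x : ℝ → ℝ) (hx : ∀ r, x r = ∫ s in (0:ℝ)..r, ((f s) ^ 2)⁻¹)
    (rInv : ℝ → ℝ) (hrInv : ∀ y > 0, 0 < rInv y ∧ x (rInv y) = y) :
    Tendsto (fun X => (1 / X) * ∫ t in (1:ℝ)..X, |f (rInv t) - 1|) atTop (nhds 0) :=
  cesaro_f_minus_one_general f c hc hbnd hO x hx rInv hrInv
end
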